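/- Let p be a prime and x an integer with 1 ≤ x < p. Run the Extended Euclidean Algorithm on (p, x) and let k be its termination index (so r_{k-1} = 1, r_k = 0). Then the product of the shifted quotients exceeds p: Π_{i=1}^{k-1} (q_i + 1) > p. -/

import Mathlib

/-- Remainder sequence of the Extended Euclidean Algorithm on `(p, x)`:
`r 0 = p`, `r 1 = x`, and `r (i+1) = r (i-1) - ⌊r (i-1) / r i⌋ * r i` for `i ≥ 1`. -/
def eeaR (p x : ℕ) : ℕ → ℕ
  | 0 => p
  | 1 => x
  | (i + 2) => eeaR p x i - (eeaR p x i / eeaR p x (i + 1)) * eeaR p x (i + 1)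

/-- Quotient sequence `q i = ⌊r (i-1) / r i⌋` of the Extended Euclidean Algorithm. -/
def eeaQ (p x i : ℕ) : ℕ := eeaR p x (i - 1) / eeaR p x i

/-- Cofactor sequence of the Extended Euclidean Algorithm:
`t 0 = 0`, `t 1 = 1`, and `t (i+1) = t (i-1) + q i * t i` for `i ≥ 1`. -/
def eeaT (p x : ℕ) : ℕ → ℕ
  | 0 => 0
  | 1 => 1
  | (i + 2) => eeaT p x i + eeaQ p x (i + 1) * eeaT p x (i + 1)


/-!
Each division step satisfies `r (i-1) < (q i + 1) * r i` (the remainder is smaller than the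
divisor), so telescoping from `r 0 = p` gives `p < (∏_{i ≤ j} (q i + 1)) * r j` as long as
`r j ≠ 0`. At `j = k - 1` the remainder is `gcd(x, p) = 1`.
-/

lemma eeaR_add_two (p x i : ℕ) : eeaR p x (i + 2) = eeaR p x i % eeaR p x (i + 1) := by
  rw [Nat.mod_eq_sub_div_mul]
  rfl

lemma gcd_eeaR_succ_eeaR (p x : ℕ) : ∀ i, Nat.gcd (eeaR p x (i + 1)) (eeaR p x i) = Nat.gcd x p
  | 0 => rfl
  | i + 1 => by rw [eeaR_add_two, ← Nat.gcd_rec, gcd_eeaR_succ_eeaR p x i]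

lemma eeaR_eq_gcd_of_eeaR_succ_eq_zero {p x j : ℕ} (h : eeaR p x (j + 1) = 0) :
    eeaR p x j = Nat.gcd x p := by
  rw [← gcd_eeaR_succ_eeaR p x j, h, Nat.gcd_zero_left]

lemma eeaR_lt_succ_eeaQ_mul {p x i : ℕ} (h : eeaR p x (i + 1) ≠ 0) :
    eeaR p x i < (eeaQ p x (i + 1) + 1) * eeaR p x (i + 1) := by
  rw [mul_comm]
  exact Nat.lt_mul_div_succ _ (Nat.pos_of_ne_zero h)

lemma lt_prod_succ_eeaQ_mul_eeaR {p x : ℕ} :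
    ∀ j, (∀ i ≤ j + 1, eeaR p x i ≠ 0) →
      p < (∏ i ∈ Finset.Icc 1 (j + 1), (eeaQ p x i + 1)) * eeaR p x (j + 1)
  | 0, h => by
    rw [Finset.Icc_self, Finset.prod_singleton]
    exact eeaR_lt_succ_eeaQ_mul (i := 0) (h 1 le_rfl)
  | j + 1, h => calc
      p < (∏ i ∈ Finset.Icc 1 (j + 1), (eeaQ p x i + 1)) * eeaR p x (j + 1) :=
        lt_prod_succ_eeaQ_mul_eeaR j fun i hi => h i (by omega)
      _ < (∏ i ∈ Finset.Icc 1 (j + 1), (eeaQ p x i + 1)) *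
            ((eeaQ p x (j + 2) + 1) * eeaR p x (j + 2)) :=
        Nat.mul_lt_mul_of_pos_left (eeaR_lt_succ_eeaQ_mul (h _ le_rfl))
          (Finset.prod_pos fun _ _ => Nat.succ_pos _)
      _ = (∏ i ∈ Finset.Icc 1 (j + 2), (eeaQ p x i + 1)) * eeaR p x (j + 2) := by
        rw [Finset.prod_Icc_succ_top (show 1 ≤ j + 1 + 1 by omega), mul_assoc]

/-- For a prime `p` and `1 ≤ x < p`, with termination index `k`
(`r_{k-1} = 1`, `r_k = 0`), the product of the shifted quotients exceeds `p`:
`Π_{i=1}^{k-1} (q_i + 1) > p`. -/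
theorem stmt_2 (p x : ℕ) (hp : p.Prime) (hx : 1 ≤ x) (hxp : x < p)
    (k : ℕ) (hk : eeaR p x k = 0) (hkmin : ∀ m < k, eeaR p x m ≠ 0) :
    p < ∏ i ∈ Finset.Icc 1 (k - 1), (eeaQ p x i + 1) := by
  obtain ⟨j, rfl⟩ : ∃ j, k = j + 2 := by
    rcases k with _ | _ | j
    · exact absurd hk hp.ne_zero
    · exact absurd hk (show x ≠ 0 by omega)
    · exact ⟨j, rfl⟩
  have hcop : Nat.gcd x p = 1 :=
    ((hp.coprime_iff_not_dvd).2 (Nat.not_dvd_of_pos_of_lt hx hxp)).symm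
  have hlast : eeaR p x (j + 1) = 1 := by
    rw [eeaR_eq_gcd_of_eeaR_succ_eq_zero hk, hcop]
  simpa [hlast] using
    lt_prod_succ_eeaQ_mul_eeaR j fun i hi => hkmin i (by omega)
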